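/- (First-iterate guarantee, BP case, k_Q dominant regime) Let F = Q + G with Q monotone submodular (curvature k_Q) and G monotone supermodular (curvature k^G < 1), both normalized and nonnegative. Let τ₀ ∈ C, m^σ the tight modular lower bound of Q at τ₀ and m the tight modular lower bound of G at τ₀, and τ₁ ∈ C a maximizer of m^σ + m over C. Then F(τ₁) ≥ ((1-k_Q)(1-k^G) - k^G)/(1-k^G) · Q(τ*) + ((1-k^G)² - k^G)/(1-k^G) · G(τ*), where τ* maximizes F over C. -/

import Mathlib

open Finset

def Submodular {V : Type*} [DecidableEq V] (F : Finset V → ℝ) : Prop :=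
  ∀ A B : Finset V, ∀ v : V, A ⊆ B → v ∉ B →
    F (insert v B) - F B ≤ F (insert v A) - F A

def Supermodular {V : Type*} [DecidableEq V] (F : Finset V → ℝ) : Prop :=
  ∀ A B : Finset V, ∀ v : V, A ⊆ B → v ∉ B →
    F (insert v A) - F A ≤ F (insert v B) - F B

def MonotoneSetFun {V : Type*} [DecidableEq V] (F : Finset V → ℝ) : Prop :=
  ∀ A B : Finset V, A ⊆ B → F A ≤ F B

def prefixSet {V : Type*} [Fintype V] [DecidableEq V]
    (σ : Fin (Fintype.card V) ≃ V) (k : ℕ) : Finset V :=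
  (Finset.univ.filter (fun i : Fin (Fintype.card V) => (i : ℕ) < k)).image σ

/-- The subgradient modular lower bound of a submodular `Q` given permutation `σ`. -/
def modularLB {V : Type*} [Fintype V] [DecidableEq V]
    (Q : Finset V → ℝ) (σ : Fin (Fintype.card V) ≃ V) (Y : Finset V) : ℝ :=
  ∑ v ∈ Y, (Q (prefixSet σ ((σ.symm v : ℕ) + 1)) - Q (prefixSet σ (σ.symm v : ℕ)))

/-- The tight modular lower bound of a supermodular `G` at `X`. -/
def supermodularLB {V : Type*} [Fintype V] [DecidableEq V]
    (G : Finset V → ℝ) (X Y : Finset V) : ℝ :=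
  G X - ∑ j ∈ X \ Y, (G (insert j (X.erase j)) - G (X.erase j)) + ∑ j ∈ Y \ X, G {j}

/-! Both modular bounds lie below their functions and `τ₁` maximizes their sum, so
`F τ₁ ≥ m^σ(τ*) + m(τ*)`. The curvatures compare the bounds at `τ*` with `Q τ*` and `G τ*`:
`m^σ(τ*) ≥ (1 - k_Q) Q τ*`, and `m(τ*) ≥ (1 - k^G) G τ* - k^G / (1 - k^G) · G τ₀`, the loss coming
from the elements of `τ₀ \ τ*`, whose marginals are at most `G {j} / (1 - k^G)`.
Finally `G τ₀ ≤ F τ₀ ≤ F τ*`. -/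

section SetFunction

variable {V : Type*} [DecidableEq V] {F : Finset V → ℝ}

theorem MonotoneSetFun.nonneg (hF : MonotoneSetFun F) (h0 : F ∅ = 0) (S : Finset V) :
    0 ≤ F S :=
  h0 ▸ hF ∅ S (empty_subset S)

theorem Submodular.le_sum_singleton (hF : Submodular F) (h0 : F ∅ = 0) (Y : Finset V) :
    F Y ≤ ∑ v ∈ Y, F {v} := by
  induction Y using Finset.induction_on with
  | empty => simp [h0]
  | insert v s hv ih =>
    have h := hF ∅ s v (empty_subset s) hv
    simp only [LawfulSingleton.insert_empty_eq, h0] at h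
    rw [sum_insert hv]
    linarith

theorem Supermodular.add_sum_singleton_le (hF : Supermodular F) (h0 : F ∅ = 0)
    (S T : Finset V) (hST : Disjoint S T) : F S + ∑ j ∈ T, F {j} ≤ F (S ∪ T) := by
  induction T using Finset.induction_on with
  | empty => simp
  | insert j T hj ih =>
    rw [disjoint_insert_right] at hST
    have hjST : j ∉ S ∪ T := by simp [hj, hST.1]
    have h := hF ∅ (S ∪ T) j (empty_subset _) hjST
    simp only [LawfulSingleton.insert_empty_eq, h0] at h
    rw [sum_insert hj, union_insert]
    linarith [ih hST.2]

theorem Supermodular.sum_singleton_le (hF : Supermodular F) (h0 : F ∅ = 0) (Y : Finset V) :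
    ∑ v ∈ Y, F {v} ≤ F Y := by
  simpa [h0] using hF.add_sum_singleton_le h0 ∅ Y (disjoint_empty_left Y)

theorem Supermodular.sub_sum_marginal_le (hF : Supermodular F) (X T : Finset V) (hT : T ⊆ X) :
    F X - ∑ j ∈ T, (F (insert j (X.erase j)) - F (X.erase j)) ≤ F (X \ T) := by
  induction T using Finset.induction_on with
  | empty => simp
  | insert j T hj ih =>
    rw [insert_subset_iff] at hT
    have hjXT : j ∈ X \ T := mem_sdiff.mpr ⟨hT.1, hj⟩
    have h := hF ((X \ T).erase j) (X.erase j) j (erase_subset_erase _ sdiff_subset)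
      (notMem_erase j X)
    rw [insert_erase hjXT] at h
    rw [sum_insert hj, sdiff_insert]
    linarith [ih hT.2]

theorem Supermodular.supermodularLB_le [Fintype V] (hF : Supermodular F) (h0 : F ∅ = 0)
    (X Y : Finset V) : supermodularLB F X Y ≤ F Y := by
  have hremove := hF.sub_sum_marginal_le X (X \ Y) sdiff_subset
  rw [sdiff_sdiff_self_left] at hremove
  have hadd := hF.add_sum_singleton_le h0 (X ∩ Y) (Y \ X)
    (disjoint_sdiff.mono_left inter_subset_left)
  rw [show X ∩ Y ∪ Y \ X = Y by rw [inter_comm]; exact sup_inf_sdiff Y X] at hadd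
  unfold supermodularLB
  linarith

end SetFunction

section Fintype

variable {V : Type*} [Fintype V] [DecidableEq V] {F : Finset V → ℝ}

theorem Submodular.marginal_univ_le (hF : Submodular F) {A : Finset V} {v : V} (hv : v ∉ A) :
    F univ - F (univ.erase v) ≤ F (insert v A) - F A := by
  have hA : A ⊆ univ.erase v := fun w hw => mem_erase.mpr ⟨ne_of_mem_of_not_mem hw hv, mem_univ w⟩
  simpa [insert_erase (mem_univ v)] using hF A (univ.erase v) v hA (notMem_erase v univ)

theorem Supermodular.le_marginal_univ (hF : Supermodular F) {A : Finset V} {v : V} (hv : v ∉ A) :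
    F (insert v A) - F A ≤ F univ - F (univ.erase v) := by
  have hA : A ⊆ univ.erase v := fun w hw => mem_erase.mpr ⟨ne_of_mem_of_not_mem hw hv, mem_univ w⟩
  simpa [insert_erase (mem_univ v)] using hF A (univ.erase v) v hA (notMem_erase v univ)

theorem Supermodular.le_sum_marginal_univ (hF : Supermodular F) (h0 : F ∅ = 0)
    (Y : Finset V) : F Y ≤ ∑ v ∈ Y, (F univ - F (univ.erase v)) := by
  induction Y using Finset.induction_on with
  | empty => simp [h0]
  | insert v s hv ih =>
    rw [sum_insert hv]
    linarith [hF.le_marginal_univ hv]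

theorem mem_prefixSet {σ : Fin (Fintype.card V) ≃ V} {k : ℕ} {v : V} :
    v ∈ prefixSet σ k ↔ (σ.symm v : ℕ) < k := by
  simp only [prefixSet, mem_image, mem_filter, mem_univ, true_and]
  exact ⟨by rintro ⟨i, hi, rfl⟩; simpa using hi, fun h => ⟨σ.symm v, h, by simp⟩⟩

theorem self_notMem_prefixSet (σ : Fin (Fintype.card V) ≃ V) (v : V) :
    v ∉ prefixSet σ (σ.symm v) := by
  simp [mem_prefixSet]

theorem insert_prefixSet (σ : Fin (Fintype.card V) ≃ V) (v : V) :
    insert v (prefixSet σ (σ.symm v)) = prefixSet σ (σ.symm v + 1) := by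
  ext w
  rw [mem_insert, mem_prefixSet, mem_prefixSet, Nat.lt_succ_iff_lt_or_eq, Fin.val_inj,
    σ.symm_apply_eq, σ.apply_symm_apply, or_comm]

theorem Submodular.modularLB_le (hF : Submodular F) (h0 : F ∅ = 0)
    (σ : Fin (Fintype.card V) ≃ V) (Y : Finset V) : modularLB F σ Y ≤ F Y := by
  induction Y using Finset.induction_on_max_value σ.symm with
  | empty => simp [modularLB, h0]
  | insert v s hv hmax ih =>
    have hs : s ⊆ prefixSet σ (σ.symm v) := fun w hw => mem_prefixSet.mpr <|
      (hmax w hw).lt_of_ne (σ.symm.injective.ne (ne_of_mem_of_not_mem hw hv))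
    have h := hF s _ v hs (self_notMem_prefixSet σ v)
    rw [insert_prefixSet] at h
    rw [modularLB, sum_insert hv, ← modularLB]
    linarith

theorem Submodular.sum_marginal_univ_le_modularLB (hF : Submodular F)
    (σ : Fin (Fintype.card V) ≃ V) (Y : Finset V) :
    ∑ v ∈ Y, (F univ - F (univ.erase v)) ≤ modularLB F σ Y :=
  sum_le_sum fun v _ => by
    simpa only [insert_prefixSet] using hF.marginal_univ_le (self_notMem_prefixSet σ v)

theorem Submodular.mul_le_modularLB (hF : Submodular F) (h0 : F ∅ = 0) {α : ℝ} (hα0 : 0 ≤ α)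
    (hα : ∀ v, α * F {v} ≤ F univ - F (univ.erase v)) (σ : Fin (Fintype.card V) ≃ V)
    (Y : Finset V) : α * F Y ≤ modularLB F σ Y :=
  calc α * F Y ≤ α * ∑ v ∈ Y, F {v} := mul_le_mul_of_nonneg_left (hF.le_sum_singleton h0 Y) hα0
    _ = ∑ v ∈ Y, α * F {v} := mul_sum Y _ α
    _ ≤ ∑ v ∈ Y, (F univ - F (univ.erase v)) := sum_le_sum fun v _ => hα v
    _ ≤ modularLB F σ Y := hF.sum_marginal_univ_le_modularLB σ Y

theorem Supermodular.mul_le_sum_singleton (hF : Supermodular F) (h0 : F ∅ = 0) {β : ℝ}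
    (hβ0 : 0 ≤ β) (hβ : ∀ v, β * (F univ - F (univ.erase v)) ≤ F {v}) (Y : Finset V) :
    β * F Y ≤ ∑ v ∈ Y, F {v} :=
  calc β * F Y ≤ β * ∑ v ∈ Y, (F univ - F (univ.erase v)) :=
        mul_le_mul_of_nonneg_left (hF.le_sum_marginal_univ h0 Y) hβ0
    _ = ∑ v ∈ Y, β * (F univ - F (univ.erase v)) := mul_sum Y _ β
    _ ≤ ∑ v ∈ Y, F {v} := sum_le_sum fun v _ => hβ v

theorem Supermodular.sum_singleton_sub_le_supermodularLB (hF : Supermodular F) (h0 : F ∅ = 0)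
    {β : ℝ} (hβ0 : 0 < β) (hβ : ∀ v, β * (F univ - F (univ.erase v)) ≤ F {v}) (X Y : Finset V) :
    ∑ j ∈ Y, F {j} - (β⁻¹ - 1) * ∑ j ∈ X \ Y, F {j} ≤ supermodularLB F X Y := by
  have hmarginal : ∑ j ∈ X \ Y, (F (insert j (X.erase j)) - F (X.erase j))
      ≤ β⁻¹ * ∑ j ∈ X \ Y, F {j} := by
    rw [mul_sum]
    exact sum_le_sum fun j _ =>
      (hF.le_marginal_univ (notMem_erase j X)).trans ((le_inv_mul_iff₀ hβ0).2 (hβ j))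
  have hX := hF.sum_singleton_le h0 X
  rw [← sum_inter_add_sum_sdiff X Y] at hX
  have hY := sum_inter_add_sum_sdiff Y X (fun j => F {j})
  rw [inter_comm] at hY
  unfold supermodularLB
  linarith

theorem Supermodular.mul_sub_le_supermodularLB (hF : Supermodular F) (hmono : MonotoneSetFun F)
    (h0 : F ∅ = 0) {β : ℝ} (hβ0 : 0 < β) (hβ1 : β ≤ 1)
    (hβ : ∀ v, β * (F univ - F (univ.erase v)) ≤ F {v}) (X Y : Finset V) :
    β * F Y - (β⁻¹ - 1) * F X ≤ supermodularLB F X Y := by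
  have hsdiff : ∑ j ∈ X \ Y, F {j} ≤ F X :=
    (sum_le_sum_of_subset_of_nonneg sdiff_subset fun j _ _ => hmono.nonneg h0 {j}).trans
      (hF.sum_singleton_le h0 X)
  have hc : 0 ≤ β⁻¹ - 1 := sub_nonneg.2 (one_le_inv₀ hβ0 |>.2 hβ1)
  linarith [mul_le_mul_of_nonneg_left hsdiff hc, hF.mul_le_sum_singleton h0 hβ0.le hβ Y,
    hF.sum_singleton_sub_le_supermodularLB h0 hβ0 hβ X Y]

end Fintype

section Curvature

variable {V : Type*} [Fintype V] [DecidableEq V] [Nonempty V] {F : Finset V → ℝ}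

noncomputable def curvature (F : Finset V → ℝ) : ℝ :=
  1 - univ.inf' univ_nonempty (fun v : V => (F univ - F (univ.erase v)) / F {v})

noncomputable def supermodularCurvature (F : Finset V → ℝ) : ℝ :=
  1 - univ.inf' univ_nonempty (fun v : V => F {v} / (F univ - F (univ.erase v)))

theorem one_sub_curvature_mul_le (hpos : ∀ v, 0 < F {v}) (v : V) :
    (1 - curvature F) * F {v} ≤ F univ - F (univ.erase v) := by
  rw [curvature, sub_sub_cancel, ← le_div_iff₀ (hpos v)]
  exact inf'_le _ (mem_univ v)

theorem MonotoneSetFun.curvature_le_one (hF : MonotoneSetFun F) (hpos : ∀ v, 0 < F {v}) :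
    curvature F ≤ 1 := by
  rw [curvature, sub_le_self_iff]
  exact le_inf' _ _ fun v _ =>
    div_nonneg (sub_nonneg.2 (hF _ _ (erase_subset v univ))) (hpos v).le

theorem one_sub_supermodularCurvature_mul_le (hpos : ∀ v, 0 < F univ - F (univ.erase v))
    (v : V) : (1 - supermodularCurvature F) * (F univ - F (univ.erase v)) ≤ F {v} := by
  rw [supermodularCurvature, sub_sub_cancel, ← le_div_iff₀ (hpos v)]
  exact inf'_le _ (mem_univ v)

theorem Supermodular.supermodularCurvature_nonneg (hF : Supermodular F) (h0 : F ∅ = 0)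
    (hpos : ∀ v, 0 < F univ - F (univ.erase v)) : 0 ≤ supermodularCurvature F := by
  obtain ⟨v⟩ := ‹Nonempty V›
  have hv : F {v} ≤ F univ - F (univ.erase v) := by
    simpa [h0] using hF.le_marginal_univ (notMem_empty v)
  rw [supermodularCurvature, sub_nonneg]
  exact (inf'_le _ (mem_univ v)).trans ((div_le_one (hpos v)).2 hv)

end Curvature

theorem first_iterate_BP_general
    {V : Type*} [Fintype V] [DecidableEq V] [Nonempty V]
    (Q G : Finset V → ℝ)
    (hQsub : Submodular Q) (hQmono : MonotoneSetFun Q) (hQ0 : Q ∅ = 0)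
    (hQpos : ∀ v : V, 0 < Q {v})
    (hGsup : Supermodular G) (hGmono : MonotoneSetFun G) (hG0 : G ∅ = 0)
    (hGpos : ∀ v : V, 0 < G univ - G (univ.erase v))
    (kQ kG : ℝ)
    (hkQ : kQ = 1 - Finset.univ.inf' Finset.univ_nonempty
            (fun w : V => (Q univ - Q (univ.erase w)) / Q {w}))
    (hkG : kG = 1 - Finset.univ.inf' Finset.univ_nonempty
            (fun v : V => G {v} / (G univ - G (univ.erase v))))
    (hkG1 : kG < 1)
    (C : Finset (Finset V)) (τ₀ τ₁ τstar : Finset V)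
    (hτ₀ : τ₀ ∈ C) (hτstar : τstar ∈ C)
    (σ : Fin (Fintype.card V) ≃ V)
    (hmax : ∀ τ ∈ C,
      modularLB Q σ τ + supermodularLB G τ₀ τ
        ≤ modularLB Q σ τ₁ + supermodularLB G τ₀ τ₁)
    (hopt : ∀ τ ∈ C, Q τ + G τ ≤ Q τstar + G τstar) :
    ((1 - kQ) * (1 - kG) - kG) / (1 - kG) * Q τstar
      + ((1 - kG) ^ 2 - kG) / (1 - kG) * G τstar
      ≤ Q τ₁ + G τ₁ := by
  replace hkQ : kQ = curvature Q := hkQ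
  replace hkG : kG = supermodularCurvature G := hkG
  subst hkQ hkG
  set α := 1 - curvature Q
  set β := 1 - supermodularCurvature G
  have hβ0 : 0 < β := sub_pos.2 hkG1
  have hβ1 : β ≤ 1 := sub_le_self _ (hGsup.supermodularCurvature_nonneg hG0 hGpos)
  have hτ₀_le : (β⁻¹ - 1) * G τ₀ ≤ (β⁻¹ - 1) * (Q τstar + G τstar) :=
    mul_le_mul_of_nonneg_left (by linarith [hopt τ₀ hτ₀, hQmono.nonneg hQ0 τ₀])
      (sub_nonneg.2 (one_le_inv₀ hβ0 |>.2 hβ1))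
  calc _ = α * Q τstar + (β * G τstar - (β⁻¹ - 1) * (Q τstar + G τstar)) := by
          field_simp
          ring
    _ ≤ α * Q τstar + (β * G τstar - (β⁻¹ - 1) * G τ₀) := by linarith
    _ ≤ modularLB Q σ τstar + supermodularLB G τ₀ τstar :=
        add_le_add
          (hQsub.mul_le_modularLB hQ0 (sub_nonneg.2 (hQmono.curvature_le_one hQpos))
            (one_sub_curvature_mul_le hQpos) σ τstar)
          (hGsup.mul_sub_le_supermodularLB hGmono hG0 hβ0 hβ1
            (one_sub_supermodularCurvature_mul_le hGpos) τ₀ τstar)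
    _ ≤ modularLB Q σ τ₁ + supermodularLB G τ₀ τ₁ := hmax τstar hτstar
    _ ≤ Q τ₁ + G τ₁ :=
        add_le_add (hQsub.modularLB_le hQ0 σ τ₁) (hGsup.supermodularLB_le hG0 τ₀ τ₁)

/-- First-iterate guarantee of GTO for monotone BP rewards `F = Q + G`. -/
theorem first_iterate_BP
    {V : Type*} [Fintype V] [DecidableEq V] [Nonempty V]
    (Q G : Finset V → ℝ)
    (hQsub : Submodular Q) (hQmono : MonotoneSetFun Q) (hQ0 : Q ∅ = 0)
    (hQnn : ∀ S : Finset V, 0 ≤ Q S) (hQpos : ∀ v : V, 0 < Q {v})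
    (hGsup : Supermodular G) (hGmono : MonotoneSetFun G) (hG0 : G ∅ = 0)
    (hGnn : ∀ S : Finset V, 0 ≤ G S)
    (hGpos : ∀ v : V, 0 < G univ - G (univ.erase v))
    (kQ kG : ℝ)
    (hkQ : kQ = 1 - Finset.univ.inf' Finset.univ_nonempty
            (fun w : V => (Q univ - Q (univ.erase w)) / Q {w}))
    (hkG : kG = 1 - Finset.univ.inf' Finset.univ_nonempty
            (fun v : V => G {v} / (G univ - G (univ.erase v))))
    (hkG1 : kG < 1)
    (C : Finset (Finset V)) (τ₀ τ₁ τstar : Finset V)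
    (hτ₀ : τ₀ ∈ C) (hτ₁ : τ₁ ∈ C) (hτstar : τstar ∈ C)
    (σ : Fin (Fintype.card V) ≃ V)
    (hσ : ∀ i : Fin (Fintype.card V), σ i ∈ τ₀ ↔ (i : ℕ) < τ₀.card)
    (hmax : ∀ τ ∈ C,
      modularLB Q σ τ + supermodularLB G τ₀ τ
        ≤ modularLB Q σ τ₁ + supermodularLB G τ₀ τ₁)
    (hopt : ∀ τ ∈ C, Q τ + G τ ≤ Q τstar + G τstar) :
    ((1 - kQ) * (1 - kG) - kG) / (1 - kG) * Q τstar
      + ((1 - kG) ^ 2 - kG) / (1 - kG) * G τstar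
      ≤ Q τ₁ + G τ₁ :=
  first_iterate_BP_general Q G hQsub hQmono hQ0 hQpos hGsup hGmono hG0 hGpos kQ kG hkQ hkG hkG1 C τ₀
    τ₁ τstar hτ₀ hτstar σ hmax hopt
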